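/- A nonnegative bounded measurable function f of compact support on ℝ² is uniquely determined by its histogram Radon transform: if Hf = Hg as measures for all lines, then in particular R(f^k) = R(g^k) for all k, and hence f = g almost everywhere. -/

import Mathlib

/-!
Equal histograms on a line give equal integrals of every function of the values, in particular
equal `k`-th moments and equal line integrals of `f` and `g`. For the injectivity of the Radon
transform, view `f` and `g` as densities of finite measures on `ℝ²`. Every linear functional is
`r` times the signed distance along some direction `θ`, so integrating along the lines orthogonal
to `θ` (Fubini after a rotation) shows that the two measures have the same image under every
linear functional. Equal one-dimensional marginals give equal characteristic functions, hence
equal measures, hence `f = g` almost everywhere.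
-/

open MeasureTheory ProbabilityTheory
open scoped ENNReal

lemma HasCompactSupport.lintegral_ofReal_ne_top {α : Type*} [TopologicalSpace α]
    [MeasurableSpace α] [OpensMeasurableSpace α] {μ : Measure α} [IsFiniteMeasureOnCompacts μ]
    {f : α → ℝ} (hf : HasCompactSupport f) {C : ℝ} (hfC : ∀ x, f x ≤ C) :
    ∫⁻ x, ENNReal.ofReal (f x) ∂μ ≠ ∞ := by
  have hsupp : (fun x => ENNReal.ofReal (f x)).support ⊆ tsupport f := fun x hx =>
    subset_tsupport f fun hfx => hx (by simp [hfx])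
  rw [← setLIntegral_eq_of_support_subset hsupp]
  refine (lt_of_le_of_lt (setLIntegral_mono measurable_const fun x _ =>
    ENNReal.ofReal_le_ofReal (hfC x)) ?_).ne
  rw [setLIntegral_const]
  exact ENNReal.mul_lt_top ENNReal.ofReal_lt_top hf.measure_lt_top

namespace Radon

noncomputable def line (θ p s : ℝ) : ℝ × ℝ :=
  (p * Real.cos θ - s * Real.sin θ, p * Real.sin θ + s * Real.cos θ)

lemma uncurry_line_eq (θ : ℝ) :
    Function.uncurry (line θ) = Complex.measurableEquivRealProd ∘
      rotation (Circle.exp θ) ∘ Complex.measurableEquivRealProd.symm := by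
  ext ⟨p, s⟩ <;>
  simp [line, rotation_apply, Circle.coe_exp, Complex.measurableEquivRealProd_symm_apply,
    Complex.exp_ofReal_mul_I_re, Complex.exp_ofReal_mul_I_im] <;> ring

lemma measurePreserving_line (θ : ℝ) :
    MeasurePreserving (Function.uncurry (line θ)) := by
  rw [uncurry_line_eq]
  exact Complex.volume_preserving_equiv_real_prod.comp
    ((rotation (Circle.exp θ)).measurePreserving.comp
      Complex.volume_preserving_equiv_real_prod.symm)

lemma measurable_line (θ p : ℝ) : Measurable (line θ p) :=
  (measurePreserving_line θ).measurable.comp measurable_prodMk_left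

lemma lintegral_eq_lintegral_line (θ : ℝ) {F : ℝ × ℝ → ℝ≥0∞} (hF : Measurable F) :
    ∫⁻ x, F x = ∫⁻ p, ∫⁻ s, F (line θ p s) := by
  rw [← (measurePreserving_line θ).lintegral_comp hF, Measure.volume_eq_prod]
  exact lintegral_prod _ (hF.comp (measurePreserving_line θ).measurable).aemeasurable

lemma exists_apply_line_eq_mul (L : StrongDual ℝ (ℝ × ℝ)) :
    ∃ r θ : ℝ, ∀ p s, L (line θ p s) = r * p := by
  set w : ℂ := ⟨L (1, 0), L (0, 1)⟩
  refine ⟨‖w‖, Complex.arg w, fun p s => ?_⟩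
  have hL : ∀ x : ℝ × ℝ, L x = x.1 * w.re + x.2 * w.im := by
    intro x
    have : x = x.1 • ((1 : ℝ), (0 : ℝ)) + x.2 • ((0 : ℝ), (1 : ℝ)) := by ext <;> simp
    rw [this, map_add, map_smul, map_smul]
    simp [w]
  rw [hL, ← Complex.norm_mul_cos_arg, ← Complex.norm_mul_sin_arg]
  simp only [line]
  linear_combination (‖w‖ * p) * Real.sin_sq_add_cos_sq (Complex.arg w)

variable {u v : ℝ × ℝ → ℝ≥0∞}

lemma lintegral_mul_comp_eq_of_lintegral_line_eq (hu : Measurable u) (hv : Measurable v)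
    (h : ∀ θ p, ∫⁻ s, u (line θ p s) = ∫⁻ s, v (line θ p s))
    (L : StrongDual ℝ (ℝ × ℝ)) {φ : ℝ → ℝ≥0∞} (hφ : Measurable φ) :
    ∫⁻ x, u x * φ (L x) = ∫⁻ x, v x * φ (L x) := by
  obtain ⟨r, θ, hL⟩ := exists_apply_line_eq_mul L
  have slice : ∀ w : ℝ × ℝ → ℝ≥0∞, Measurable w →
      ∫⁻ x, w x * φ (L x) = ∫⁻ p, φ (r * p) * ∫⁻ s, w (line θ p s) := by
    intro w hw
    rw [lintegral_eq_lintegral_line θ (F := fun x => w x * φ (L x))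
      (hw.mul (hφ.comp L.measurable))]
    refine lintegral_congr fun p => ?_
    simp_rw [hL, mul_comm (w _)]
    exact lintegral_const_mul _ (hw.comp (measurable_line θ p))
  simp_rw [slice u hu, slice v hv, h]

lemma map_withDensity_eq_of_lintegral_line_eq (hu : Measurable u) (hv : Measurable v)
    (h : ∀ θ p, ∫⁻ s, u (line θ p s) = ∫⁻ s, v (line θ p s))
    (L : StrongDual ℝ (ℝ × ℝ)) :
    (volume.withDensity u).map L = (volume.withDensity v).map L := by
  ext B hB
  have hχ : Measurable (B.indicator (1 : ℝ → ℝ≥0∞)) := measurable_one.indicator hB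
  rw [← lintegral_indicator_one hB, ← lintegral_indicator_one hB,
    lintegral_map hχ L.measurable, lintegral_map hχ L.measurable]
  exact (lintegral_withDensity_eq_lintegral_mul _ hu (hχ.comp L.measurable)).trans <|
    (lintegral_mul_comp_eq_of_lintegral_line_eq hu hv h L hχ).trans
    (lintegral_withDensity_eq_lintegral_mul _ hv (hχ.comp L.measurable)).symm

lemma lintegral_eq_of_lintegral_line_eq (hu : Measurable u) (hv : Measurable v)
    (h : ∀ θ p, ∫⁻ s, u (line θ p s) = ∫⁻ s, v (line θ p s)) :
    ∫⁻ x, u x = ∫⁻ x, v x := by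
  rw [lintegral_eq_lintegral_line 0 hu, lintegral_eq_lintegral_line 0 hv]
  simp_rw [h]

lemma ae_eq_of_lintegral_line_eq (hu : Measurable u) (hv : Measurable v)
    (h : ∀ θ p, ∫⁻ s, u (line θ p s) = ∫⁻ s, v (line θ p s))
    (hfin : ∫⁻ x, u x ≠ ∞) : u =ᵐ[volume] v := by
  have : IsFiniteMeasure (volume.withDensity u) := isFiniteMeasure_withDensity hfin
  have : IsFiniteMeasure (volume.withDensity v) := isFiniteMeasure_withDensity
    (lintegral_eq_of_lintegral_line_eq hu hv h ▸ hfin)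
  refine (withDensity_eq_iff hu.aemeasurable hv.aemeasurable hfin).1 <|
    Measure.ext_of_charFunDual (funext fun L => ?_)
  rw [charFunDual_eq_charFun_map_one, charFunDual_eq_charFun_map_one,
    map_withDensity_eq_of_lintegral_line_eq hu hv h]

end Radon

theorem histogram_radon_determines_function_general
    (f g : ℝ × ℝ → ℝ) (hf : Measurable f) (hg : Measurable g)
    (hfs : HasCompactSupport f)
    (hf0 : ∀ x, 0 ≤ f x) (hg0 : ∀ x, 0 ≤ g x)
    (C : ℝ) (hfC : ∀ x, f x ≤ C)
    (ℓ : ℝ → ℝ → ℝ → ℝ × ℝ)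
    (hℓ : ℓ = fun θ p s =>
      (p * Real.cos θ - s * Real.sin θ, p * Real.sin θ + s * Real.cos θ))
    (hH : ∀ θ p : ℝ,
      Measure.map (fun s => f (ℓ θ p s)) volume
        = Measure.map (fun s => g (ℓ θ p s)) volume) :
    (∀ (k : ℕ) (θ p : ℝ),
        ∫ s : ℝ, (f (ℓ θ p s)) ^ k = ∫ s : ℝ, (g (ℓ θ p s)) ^ k)
    ∧ f =ᵐ[volume] g := by
  obtain rfl : ℓ = Radon.line := hℓ
  have hdist : ∀ θ p, IdentDistrib (fun s => f (Radon.line θ p s))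
      (fun s => g (Radon.line θ p s)) volume volume := fun θ p =>
    ⟨(hf.comp (Radon.measurable_line θ p)).aemeasurable,
      (hg.comp (Radon.measurable_line θ p)).aemeasurable, hH θ p⟩
  refine ⟨fun k θ p => (hdist θ p).pow.integral_eq, ?_⟩
  have hline : ∀ θ p, ∫⁻ s, ENNReal.ofReal (f (Radon.line θ p s))
      = ∫⁻ s, ENNReal.ofReal (g (Radon.line θ p s)) := fun θ p =>
    ((hdist θ p).comp ENNReal.measurable_ofReal).lintegral_eq
  filter_upwards [Radon.ae_eq_of_lintegral_line_eq hf.ennreal_ofReal hg.ennreal_ofReal hline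
    (hfs.lintegral_ofReal_ne_top hfC)] with x hx
  exact (ENNReal.ofReal_eq_ofReal_iff (hf0 x) (hg0 x)).1 hx

theorem histogram_radon_determines_function
    (f g : ℝ × ℝ → ℝ) (hf : Measurable f) (hg : Measurable g)
    (hfs : HasCompactSupport f) (hgs : HasCompactSupport g)
    (hf0 : ∀ x, 0 ≤ f x) (hg0 : ∀ x, 0 ≤ g x)
    (C : ℝ) (hfC : ∀ x, f x ≤ C) (hgC : ∀ x, g x ≤ C)
    (ℓ : ℝ → ℝ → ℝ → ℝ × ℝ)
    (hℓ : ℓ = fun θ p s =>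
      (p * Real.cos θ - s * Real.sin θ, p * Real.sin θ + s * Real.cos θ))
    (hH : ∀ θ p : ℝ,
      Measure.map (fun s => f (ℓ θ p s)) volume
        = Measure.map (fun s => g (ℓ θ p s)) volume) :
    (∀ (k : ℕ) (θ p : ℝ),
        ∫ s : ℝ, (f (ℓ θ p s)) ^ k = ∫ s : ℝ, (g (ℓ θ p s)) ^ k)
    ∧ f =ᵐ[volume] g :=
  histogram_radon_determines_function_general f g hf hg hfs hf0 hg0 C hfC ℓ hℓ hH
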